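/- arXiv:1402.3247 — 4 statements merged into one kernel-verified Lean document; each statement's English description precedes it below -/
import Mathlib

section
/- Let F ≥ 1 files have sizes S_1,…,S_F > 0, strictly decreasing popularities θ_1 > θ_2 > … > θ_F ≥ 0, and cache capacity M ≥ 0. If x is LP-feasible and has two distinct coordinates i ≠ j with 0 < x_i < 1 and 0 < x_j < 1, then x is not optimal: there exists an LP-feasible x' with r(x') > r(x). Consequently, every optimal solution of the LP relaxation has at most one non-integer coordinate. -/
/-!
If `x_i, x_j` are both fractional, say with `θ_i > θ_j`, then shifting cache space `ε > 0`
from file `j` to file `i` (raising `x_i` by `ε / S_i`, lowering `x_j` by `ε / S_j`) keeps the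
occupied space fixed and raises the reward by `(θ_i - θ_j) ε`; for `ε` small it stays feasible.
-/

/-- LP-feasibility for the LP relaxation of the single-period cache problem. -/
def LPFeasible {F : ℕ} (S : Fin F → ℝ) (M : ℝ) (x : Fin F → ℝ) : Prop :=
  (∀ f, 0 ≤ x f ∧ x f ≤ 1) ∧ ∑ f, S f * x f ≤ M

/-- Reward of a cache vector. -/
def reward {F : ℕ} (θ S : Fin F → ℝ) (x : Fin F → ℝ) : ℝ :=
  ∑ f, θ f * S f * x f

section Transfer

variable {ι : Type*} [Fintype ι] [DecidableEq ι]

theorem sum_mul_add_single_sub_single (c x : ι → ℝ) (i j : ι) (a b : ℝ) :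
    ∑ f, c f * (x + Pi.single i a - Pi.single j b : ι → ℝ) f =
      ∑ f, c f * x f + c i * a - c j * b := by
  simp [mul_add, mul_sub, Finset.sum_add_distrib, Finset.sum_sub_distrib, Pi.single_apply]

noncomputable def transfer (S x : ι → ℝ) (i j : ι) (ε : ℝ) : ι → ℝ :=
  x + Pi.single i (ε / S i) - Pi.single j (ε / S j)

theorem sum_mul_transfer (S x : ι → ℝ) {i j : ι} (hi : S i ≠ 0) (hj : S j ≠ 0) (ε : ℝ) :
    ∑ f, S f * transfer S x i j ε f = ∑ f, S f * x f := by
  rw [transfer, sum_mul_add_single_sub_single, mul_div_cancel₀ _ hi, mul_div_cancel₀ _ hj]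
  ring

end Transfer

section LPFeasible

variable {F : ℕ} {S θ x : Fin F → ℝ} {M : ℝ} {i j : Fin F}

theorem reward_transfer (hi : S i ≠ 0) (hj : S j ≠ 0) (ε : ℝ) :
    reward θ S (transfer S x i j ε) = reward θ S x + (θ i - θ j) * ε := by
  rw [reward, transfer, sum_mul_add_single_sub_single, mul_assoc (θ i), mul_div_cancel₀ _ hi,
    mul_assoc (θ j), mul_div_cancel₀ _ hj, reward]
  ring

theorem LPFeasible.transfer (hx : LPFeasible S M x) (hS : ∀ f, 0 < S f) (hij : i ≠ j)
    {ε : ℝ} (hε : 0 ≤ ε) (hεi : ε ≤ (1 - x i) * S i) (hεj : ε ≤ x j * S j) :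
    LPFeasible S M (transfer S x i j ε) := by
  obtain ⟨hbounds, hcap⟩ := hx
  refine ⟨fun f => ?_, (sum_mul_transfer S x (hS i).ne' (hS j).ne' ε).trans_le hcap⟩
  have hi : 0 ≤ ε / S i ∧ ε / S i ≤ 1 - x i :=
    ⟨div_nonneg hε (hS i).le, (div_le_iff₀ (hS i)).2 hεi⟩
  have hj : 0 ≤ ε / S j ∧ ε / S j ≤ x j :=
    ⟨div_nonneg hε (hS j).le, (div_le_iff₀ (hS j)).2 hεj⟩
  simp only [_root_.transfer, Pi.sub_apply, Pi.add_apply, Pi.single_apply]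
  rcases eq_or_ne f i with rfl | hfi
  · simp only [if_true, if_neg hij, sub_zero]
    constructor <;> linarith [hbounds f]
  · rcases eq_or_ne f j with rfl | hfj
    · simp only [if_true, if_neg hfi, add_zero]
      constructor <;> linarith [hbounds f]
    · simpa only [if_neg hfi, if_neg hfj, add_zero, sub_zero] using hbounds f

theorem LPFeasible.exists_reward_lt (hx : LPFeasible S M x) (hS : ∀ f, 0 < S f) (hij : i ≠ j)
    (hθ : θ j < θ i) (hi : x i < 1) (hj : 0 < x j) :
    ∃ x', LPFeasible S M x' ∧ reward θ S x < reward θ S x' := by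
  set ε := min ((1 - x i) * S i) (x j * S j)
  have hε : 0 < ε := lt_min (mul_pos (sub_pos.2 hi) (hS i)) (mul_pos hj (hS j))
  refine ⟨_root_.transfer S x i j ε,
    hx.transfer hS hij hε.le (min_le_left _ _) (min_le_right _ _), ?_⟩
  rw [reward_transfer (hS i).ne' (hS j).ne']
  exact lt_add_of_pos_right _ (mul_pos (sub_pos.2 hθ) hε)

end LPFeasible

theorem lp_optimal_at_most_one_fractional_general
    (F : ℕ) (S θ : Fin F → ℝ)
    (hS : ∀ f, 0 < S f)
    (hθdec : ∀ i j : Fin F, i < j → θ j < θ i)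
    (M : ℝ) :
    (∀ x : Fin F → ℝ, LPFeasible S M x →
      ∀ i j : Fin F, i ≠ j → 0 < x i → x i < 1 → 0 < x j → x j < 1 →
        ∃ x', LPFeasible S M x' ∧ reward θ S x < reward θ S x') ∧
    (∀ x : Fin F → ℝ, LPFeasible S M x →
      (∀ y, LPFeasible S M y → reward θ S y ≤ reward θ S x) →
      ∀ i j : Fin F, i ≠ j →
        ¬((0 < x i ∧ x i < 1) ∧ (0 < x j ∧ x j < 1))) := by
  have improve : ∀ x : Fin F → ℝ, LPFeasible S M x →
      ∀ i j : Fin F, i ≠ j → 0 < x i → x i < 1 → 0 < x j → x j < 1 →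
        ∃ x', LPFeasible S M x' ∧ reward θ S x < reward θ S x' := by
    intro x hx i j hij h0i h1i h0j h1j
    rcases hij.lt_or_gt with h | h
    · exact hx.exists_reward_lt hS hij (hθdec i j h) h1i h0j
    · exact hx.exists_reward_lt hS hij.symm (hθdec j i h) h1j h0i
  refine ⟨improve, fun x hx hopt i j hij ⟨⟨h0i, h1i⟩, h0j, h1j⟩ => ?_⟩
  obtain ⟨x', hx', hlt⟩ := improve x hx i j hij h0i h1i h0j h1j
  exact (hopt x' hx').not_gt hlt

/-- with strictly decreasing popularities, an LP-feasible vector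
with two fractional coordinates is not optimal; hence every optimal LP solution
has at most one non-integer coordinate. -/
theorem lp_optimal_at_most_one_fractional
    (F : ℕ) (hF : 1 ≤ F) (S θ : Fin F → ℝ)
    (hS : ∀ f, 0 < S f)
    (hθdec : ∀ i j : Fin F, i < j → θ j < θ i)
    (hθ0 : ∀ f, 0 ≤ θ f)
    (M : ℝ) (hM0 : 0 ≤ M) :
    (∀ x : Fin F → ℝ, LPFeasible S M x →
      ∀ i j : Fin F, i ≠ j → 0 < x i → x i < 1 → 0 < x j → x j < 1 →
        ∃ x', LPFeasible S M x' ∧ reward θ S x < reward θ S x') ∧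
    (∀ x : Fin F → ℝ, LPFeasible S M x →
      (∀ y, LPFeasible S M y → reward θ S y ≤ reward θ S x) →
      ∀ i j : Fin F, i ≠ j →
        ¬((0 < x i ∧ x i < 1) ∧ (0 < x j ∧ x j < 1))) :=
  lp_optimal_at_most_one_fractional_general F S θ hS hθdec M
end

section
/- (Greedy approximation ratio under Zipf popularity.) Let F ≥ 1 files have sizes S_1,…,S_F with 0 < s_min ≤ S_f ≤ s_max for all f, and Zipf popularities θ_f = U · f^{−γ} / (Σ_{i=1}^F i^{−γ}) with U > 0 and γ ≥ 0. Let the cache capacity M satisfy s_max ≤ M < Σ_{f=1}^F S_f, and assume ⌊M/s_max⌋ + 1 ≤ F. Let n be the least index with Σ_{j=1}^n S_j > M and let the greedy vector x^G be defined by x^G_j = 1 for j < n and x^G_j = 0 for j ≥ n. Then OPT ≤ (1 + (s_max/s_min) · ⌈M/s_max⌉^{−γ} / (Σ_{i=1}^{⌊M/s_max⌋} i^{−γ})) · r(x^G). -/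
/-- 0-1 feasibility for the single-period cache (knapsack) problem. -/
def ZOFeasible {F : ℕ} (S : Fin F → ℝ) (M : ℝ) (x : Fin F → ℝ) : Prop :=
  (∀ f, x f = 0 ∨ x f = 1) ∧ ∑ f, S f * x f ≤ M

/-!
Dantzig's bound: as `θ` is decreasing, a feasible `y` earns at most the greedy prefix `f < n`
plus `θ n * S n ≤ θ n * s_max`, where `n` is the critical item. From
`M < ∑_{j ≤ n} S j ≤ (n + 1) s_max` we get `⌊M / s_max⌋ ≤ n` and `⌈M / s_max⌉ ≤ n + 1`, so
`θ n ≤ c ⌈M / s_max⌉^{-γ}` while the greedy reward is at least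
`s_min c ∑_{i ≤ ⌊M / s_max⌋} i^{-γ}`, with `c = U / ∑_{i ≤ F} i^{-γ}`.
-/

open Finset

section Knapsack

variable {F : ℕ}

lemma sum_Iio_fin_eq_sum_range (g : ℕ → ℝ) (n : Fin F) :
    ∑ f ∈ Iio n, g f = ∑ i ∈ range n, g i := by
  rw [← Nat.Iio_eq_range, ← Fin.map_valEmbedding_Iio, sum_map]
  rfl

def prefixIndicator (n : Fin F) : Fin F → ℝ := fun j => if j < n then 1 else 0

lemma sum_mul_prefixIndicator (g : Fin F → ℝ) (n : Fin F) :
    ∑ f, g f * prefixIndicator n f = ∑ f ∈ Iio n, g f := by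
  simp only [prefixIndicator, mul_ite, mul_one, mul_zero, sum_ite, sum_const_zero, add_zero,
    filter_gt_eq_Iio]

lemma reward_prefixIndicator (θ S : Fin F → ℝ) (n : Fin F) :
    reward θ S (prefixIndicator n) = ∑ f ∈ Iio n, θ f * S f :=
  sum_mul_prefixIndicator _ n

lemma mul_sum_Iio_le_reward_prefixIndicator {θ S : Fin F → ℝ} {smin : ℝ} (hθ : ∀ f, 0 ≤ θ f)
    (hS : ∀ f, smin ≤ S f) (n : Fin F) :
    smin * ∑ f ∈ Iio n, θ f ≤ reward θ S (prefixIndicator n) := by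
  rw [reward_prefixIndicator, mul_sum]
  exact sum_le_sum fun f _ => by rw [mul_comm]; exact mul_le_mul_of_nonneg_left (hS f) (hθ f)

/-- Dantzig's bound for the fractional relaxation. -/
lemma reward_le_reward_prefixIndicator_add_of_antitone {θ S y : Fin F → ℝ} (hθ : Antitone θ)
    (hS : ∀ f, 0 ≤ S f) (hy : ∀ f, 0 ≤ y f ∧ y f ≤ 1) (n : Fin F) :
    reward θ S y ≤ reward θ S (prefixIndicator n) +
      θ n * (∑ f, S f * y f - ∑ f ∈ Iio n, S f) := by
  have hterm : ∀ f, (θ f - θ n) * S f * (y f - prefixIndicator n f) ≤ 0 := by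
    intro f
    rcases lt_or_ge f n with hf | hf
    · have : y f - prefixIndicator n f ≤ 0 := by simp [prefixIndicator, hf, (hy f).2]
      exact mul_nonpos_of_nonneg_of_nonpos
        (mul_nonneg (sub_nonneg.2 (hθ hf.le)) (hS f)) this
    · have : y f - prefixIndicator n f = y f := by simp [prefixIndicator, not_lt.2 hf]
      rw [this]
      exact mul_nonpos_of_nonpos_of_nonneg
        (mul_nonpos_of_nonpos_of_nonneg (sub_nonpos.2 (hθ hf)) (hS f)) (hy f).1
  have hsum : reward θ S y - reward θ S (prefixIndicator n)
      - θ n * (∑ f, S f * y f - ∑ f ∈ Iio n, S f)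
      = ∑ f, (θ f - θ n) * S f * (y f - prefixIndicator n f) := by
    rw [← sum_mul_prefixIndicator, reward, reward, mul_sub, mul_sum, mul_sum,
      ← sum_sub_distrib, ← sum_sub_distrib, ← sum_sub_distrib]
    exact sum_congr rfl fun f _ => by ring
  linarith [sum_nonpos fun f (_ : f ∈ univ) => hterm f]

lemma ZOFeasible.reward_le_reward_prefixIndicator_add {θ S y : Fin F → ℝ} {M : ℝ}
    {n : Fin F} (hy : ZOFeasible S M y) (hθ : Antitone θ) (hθn : 0 ≤ θ n)
    (hS : ∀ f, 0 ≤ S f) (hn : M < ∑ j ∈ Iic n, S j) :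
    reward θ S y ≤ reward θ S (prefixIndicator n) + θ n * S n := by
  have hy01 : ∀ f, 0 ≤ y f ∧ y f ≤ 1 := fun f => by rcases hy.1 f with h | h <;> simp [h]
  have hgap : ∑ f, S f * y f - ∑ f ∈ Iio n, S f ≤ S n := by
    rw [← Iio_insert, sum_insert (by simp)] at hn
    linarith [hy.2]
  calc reward θ S y ≤ _ := reward_le_reward_prefixIndicator_add_of_antitone hθ hS hy01 n
    _ ≤ _ := by gcongr

lemma div_lt_val_add_one_of_lt_sum_Iic {S : Fin F → ℝ} {M smax : ℝ} (hsmax : 0 < smax)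
    (hS : ∀ f, S f ≤ smax) {n : Fin F} (hn : M < ∑ j ∈ Iic n, S j) : M / smax < n + 1 := by
  rw [div_lt_iff₀ hsmax]
  calc M < ∑ j ∈ Iic n, S j := hn
    _ ≤ ∑ _j ∈ Iic n, smax := sum_le_sum fun j _ => hS j
    _ = (n + 1) * smax := by simp

end Knapsack

section Zipf

lemma antitone_natCast_add_one_rpow_neg {γ : ℝ} (hγ : 0 ≤ γ) :
    Antitone fun i : ℕ => ((i : ℝ) + 1) ^ (-γ) := fun i j hij =>
  Real.rpow_le_rpow_of_nonpos (by positivity) (by gcongr) (by linarith)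

lemma add_one_rpow_neg_le_div_mul_sum_range {γ a : ℝ} (hγ : 0 ≤ γ) {n : ℕ}
    (ha : 1 ≤ a) (han : a < n + 1) :
    ((n : ℝ) + 1) ^ (-γ) ≤
      (⌈a⌉₊ : ℝ) ^ (-γ) / (∑ i ∈ range ⌊a⌋₊, ((i : ℝ) + 1) ^ (-γ)) *
        ∑ i ∈ range n, ((i : ℝ) + 1) ^ (-γ) := by
  have hfloor_pos : 1 ≤ ⌊a⌋₊ := Nat.le_floor (by exact_mod_cast ha)
  have hfloor_le : ⌊a⌋₊ ≤ n :=
    Nat.lt_succ_iff.1 ((Nat.floor_lt (by linarith)).2 (by simpa using han))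
  have hceil_pos : (1 : ℝ) ≤ ⌈a⌉₊ := by exact_mod_cast Nat.one_le_ceil_iff.2 (by linarith)
  have hceil_le : (⌈a⌉₊ : ℝ) ≤ n + 1 := by exact_mod_cast Nat.ceil_le.2 (by push_cast; linarith)
  have hB : 0 < ∑ i ∈ range ⌊a⌋₊, ((i : ℝ) + 1) ^ (-γ) :=
    sum_pos (fun i _ => by positivity) (nonempty_range_iff.2 (by omega))
  have hBT : ∑ i ∈ range ⌊a⌋₊, ((i : ℝ) + 1) ^ (-γ) ≤ ∑ i ∈ range n, ((i : ℝ) + 1) ^ (-γ) :=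
    sum_le_sum_of_subset_of_nonneg (range_subset_range.2 hfloor_le) fun i _ _ => by positivity
  calc ((n : ℝ) + 1) ^ (-γ) ≤ (⌈a⌉₊ : ℝ) ^ (-γ) :=
        Real.rpow_le_rpow_of_nonpos (by positivity) hceil_le (by linarith)
    _ ≤ _ := by
        rw [div_mul_eq_mul_div, le_div_iff₀ hB]
        exact mul_le_mul_of_nonneg_left hBT (by positivity)

end Zipf

/-- File `f` of the paper (1-indexed) is index `f - 1 : Fin F`. -/
theorem greedy_zipf_ratio_general
    (F : ℕ) (S θ : Fin F → ℝ)
    (smin smax : ℝ) (hsmin : 0 < smin)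
    (hSmin : ∀ f, smin ≤ S f) (hSmax : ∀ f, S f ≤ smax)
    (U γ : ℝ) (hU : 0 < U) (hγ : 0 ≤ γ)
    (hθ : ∀ f : Fin F,
      θ f = U * ((f : ℕ) + 1 : ℝ) ^ (-γ) /
        ∑ i ∈ Finset.range F, ((i : ℝ) + 1) ^ (-γ))
    (M : ℝ) (hM : smax ≤ M)
    (n : Fin F)
    (hn : M < ∑ j ∈ Finset.Iic n, S j)
    (xG : Fin F → ℝ)
    (hxG : ∀ j, xG j = if j < n then 1 else 0) :
    ∀ y, ZOFeasible S M y →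
      reward θ S y ≤
        (1 + (smax / smin) *
          ((Nat.ceil (M / smax) : ℝ) ^ (-γ) /
            ∑ i ∈ Finset.range (Nat.floor (M / smax)), ((i : ℝ) + 1) ^ (-γ))) *
          reward θ S xG := by
  intro y hy
  obtain rfl : xG = prefixIndicator n := funext hxG
  set c := U / ∑ i ∈ range F, ((i : ℝ) + 1) ^ (-γ)
  have hc : 0 ≤ c := by positivity
  have hθc : θ = fun f : Fin F => c * ((f : ℕ) + 1 : ℝ) ^ (-γ) :=
    funext fun f => by rw [hθ]; ring
  have hθ0 : ∀ f, 0 ≤ θ f := fun f => by rw [hθc]; positivity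
  have hsmax : 0 < smax := hsmin.trans_le ((hSmin n).trans (hSmax n))
  have hopt := hy.reward_le_reward_prefixIndicator_add (hθc ▸
    ((antitone_natCast_add_one_rpow_neg hγ).comp_monotone Fin.val_strictMono.monotone).const_mul hc)
    (hθ0 n) (fun f => hsmin.le.trans (hSmin f)) hn
  have hgreedy : smin * (c * ∑ i ∈ range n, ((i : ℝ) + 1) ^ (-γ)) ≤
      reward θ S (prefixIndicator n) := by
    refine le_of_eq_of_le ?_ (mul_sum_Iio_le_reward_prefixIndicator hθ0 hSmin n)
    rw [hθc, ← mul_sum, sum_Iio_fin_eq_sum_range (fun i : ℕ => ((i : ℝ) + 1) ^ (-γ))]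
  have hcrit := add_one_rpow_neg_le_div_mul_sum_range hγ ((one_le_div hsmax).2 hM)
    (div_lt_val_add_one_of_lt_sum_Iic hsmax hSmax hn)
  set ratio := (⌈M / smax⌉₊ : ℝ) ^ (-γ) / ∑ i ∈ range ⌊M / smax⌋₊, ((i : ℝ) + 1) ^ (-γ)
  have hcrit_reward : θ n * S n ≤ smax / smin * ratio * reward θ S (prefixIndicator n) :=
    calc θ n * S n ≤ c * ((n : ℕ) + 1 : ℝ) ^ (-γ) * smax := by
          rw [hθc]; exact mul_le_mul_of_nonneg_left (hSmax n) (by positivity)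
      _ ≤ c * (ratio * ∑ i ∈ range n, ((i : ℝ) + 1) ^ (-γ)) * smax := by gcongr
      _ = smax / smin * ratio * (smin * (c * ∑ i ∈ range n, ((i : ℝ) + 1) ^ (-γ))) := by
          field_simp
      _ ≤ _ := by gcongr
  linarith

/-- Greedy approximation ratio under Zipf popularity:
`OPT ≤ (1 + (s_max/s_min) · ⌈M/s_max⌉^{-γ} / Σ_{i=1}^{⌊M/s_max⌋} i^{-γ}) · r(x^G)`.
File `f` of the paper (1-indexed) is index `f - 1 : Fin F`, so its Zipf
popularity is `U ((f:ℕ)+1)^{-γ} / Σ_{i=1}^{F} i^{-γ}`. -/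
theorem greedy_zipf_ratio
    (F : ℕ) (hF : 1 ≤ F) (S θ : Fin F → ℝ)
    (smin smax : ℝ) (hsmin : 0 < smin)
    (hSmin : ∀ f, smin ≤ S f) (hSmax : ∀ f, S f ≤ smax)
    (U γ : ℝ) (hU : 0 < U) (hγ : 0 ≤ γ)
    (hθ : ∀ f : Fin F,
      θ f = U * ((f : ℕ) + 1 : ℝ) ^ (-γ) /
        ∑ i ∈ Finset.range F, ((i : ℝ) + 1) ^ (-γ))
    (M : ℝ) (hM : smax ≤ M) (hMlt : M < ∑ f, S f)
    (hfloor : Nat.floor (M / smax) + 1 ≤ F)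
    (n : Fin F)
    (hn : M < ∑ j ∈ Finset.Iic n, S j)
    (hn_least : ∀ m : Fin F, m < n → ∑ j ∈ Finset.Iic m, S j ≤ M)
    (xG : Fin F → ℝ)
    (hxG : ∀ j, xG j = if j < n then 1 else 0) :
    ∀ y, ZOFeasible S M y →
      reward θ S y ≤
        (1 + (smax / smin) *
          ((Nat.ceil (M / smax) : ℝ) ^ (-γ) /
            ∑ i ∈ Finset.range (Nat.floor (M / smax)), ((i : ℝ) + 1) ^ (-γ))) *
          reward θ S xG :=
  greedy_zipf_ratio_general F S θ smin smax hsmin hSmin hSmax U γ hU hγ hθ M hM n hn xG hxG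
end

section
/- (Asymptotic optimality of greedy for large caches.) Fix real numbers s_max ≥ s_min > 0 and γ ≥ 0. Then the approximation-ratio bound B(M) = 1 + (s_max/s_min) · ⌈M/s_max⌉^{−γ} / (Σ_{i=1}^{⌊M/s_max⌋} i^{−γ}) tends to 1 as the cache capacity M tends to infinity. -/
/-!
Every term `(i + 1) ^ (-γ)` with `i < n` is at least `n ^ (-γ)`, so the partial sum is at least
`n · n ^ (-γ)`; since `⌊x⌋ ≤ ⌈x⌉`, the ratio `⌈x⌉ ^ (-γ) / ∑_{i < ⌊x⌋} (i + 1) ^ (-γ)` is therefore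
at most `1 / ⌊x⌋`, uniformly in `γ ≥ 0`, and tends to `0`.
-/

open Filter Finset

lemma natCast_mul_rpow_neg_le_sum_range {γ : ℝ} (hγ : 0 ≤ γ) (n : ℕ) :
    (n : ℝ) * (n : ℝ) ^ (-γ) ≤ ∑ i ∈ range n, ((i : ℝ) + 1) ^ (-γ) := by
  have hterm : ∀ i ∈ range n, (n : ℝ) ^ (-γ) ≤ ((i : ℝ) + 1) ^ (-γ) := fun i hi => by
    have hin : (i : ℝ) + 1 ≤ n := by exact_mod_cast mem_range.mp hi
    exact Real.rpow_le_rpow_of_nonpos (by positivity) hin (neg_nonpos.mpr hγ)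
  simpa using card_nsmul_le_sum (range n) _ _ hterm

lemma natCeil_rpow_neg_div_sum_range_floor_le {γ : ℝ} (hγ : 0 ≤ γ) {x : ℝ} (hx : 1 ≤ x) :
    (⌈x⌉₊ : ℝ) ^ (-γ) / ∑ i ∈ range ⌊x⌋₊, ((i : ℝ) + 1) ^ (-γ) ≤ (⌊x⌋₊ : ℝ)⁻¹ := by
  have hfloor : (0 : ℝ) < ⌊x⌋₊ := by exact_mod_cast Nat.floor_pos.mpr hx
  have hceil : (⌈x⌉₊ : ℝ) ^ (-γ) ≤ (⌊x⌋₊ : ℝ) ^ (-γ) :=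
    Real.rpow_le_rpow_of_nonpos hfloor (by exact_mod_cast Nat.floor_le_ceil x) (neg_nonpos.mpr hγ)
  calc (⌈x⌉₊ : ℝ) ^ (-γ) / ∑ i ∈ range ⌊x⌋₊, ((i : ℝ) + 1) ^ (-γ)
      ≤ (⌊x⌋₊ : ℝ) ^ (-γ) / ((⌊x⌋₊ : ℝ) * (⌊x⌋₊ : ℝ) ^ (-γ)) := by
        gcongr
        exact natCast_mul_rpow_neg_le_sum_range hγ _
    _ = (⌊x⌋₊ : ℝ)⁻¹ := by
        rw [div_mul_cancel_right₀ (Real.rpow_pos_of_pos hfloor _).ne']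

lemma tendsto_natCeil_rpow_neg_div_sum_range_floor {γ : ℝ} (hγ : 0 ≤ γ) :
    Tendsto (fun x : ℝ => (⌈x⌉₊ : ℝ) ^ (-γ) / ∑ i ∈ range ⌊x⌋₊, ((i : ℝ) + 1) ^ (-γ))
      atTop (nhds 0) := by
  refine squeeze_zero' (Eventually.of_forall fun x => by positivity) ?_
    (tendsto_inv_atTop_zero.comp (tendsto_natCast_atTop_atTop.comp tendsto_nat_floor_atTop))
  filter_upwards [eventually_ge_atTop 1] with x hx
  exact natCeil_rpow_neg_div_sum_range_floor_le hγ hx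

/-- Asymptotic optimality of greedy for large caches: the
approximation-ratio bound
`B(M) = 1 + (s_max/s_min) · ⌈M/s_max⌉^{-γ} / Σ_{i=1}^{⌊M/s_max⌋} i^{-γ}`
tends to `1` as `M → ∞`. -/
theorem zipf_ratio_bound_tendsto_one
    (smin smax γ : ℝ) (hsmin : 0 < smin) (hle : smin ≤ smax) (hγ : 0 ≤ γ) :
    Filter.Tendsto
      (fun M : ℝ =>
        1 + (smax / smin) *
          ((Nat.ceil (M / smax) : ℝ) ^ (-γ) /
            ∑ i ∈ Finset.range (Nat.floor (M / smax)), ((i : ℝ) + 1) ^ (-γ)))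
      Filter.atTop (nhds 1) := by
  have hratio := (tendsto_natCeil_rpow_neg_div_sum_range_floor hγ).comp
    (tendsto_id.atTop_div_const (hsmin.trans_le hle))
  simpa using (hratio.const_mul (smax / smin)).const_add 1
end

section
/- (Strict exchange reduces fractional coordinates without losing reward.) Let F ≥ 1 files have sizes S_1,…,S_F > 0, popularities θ_f ≥ 0, and cache capacity M ≥ 0. Suppose x is LP-feasible with two distinct coordinates i ≠ j satisfying θ_i ≥ θ_j, 0 < x_i < 1, and 0 < x_j < 1, and set S = S_i x_i + S_j x_j. Then the vector x' that agrees with x outside {i, j} and has (x'_i, x'_j) = (1, (S − S_i)/S_j) if S ≥ S_i, and (x'_i, x'_j) = (S/S_i, 0) if S < S_i, is LP-feasible, satisfies S_i x'_i + S_j x'_j = S, has at least one fewer non-integer coordinate among {i, j} than x, and satisfies r(x') ≥ r(x); moreover r(x') > r(x) whenever θ_i > θ_j. -/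
/-!
Only the two coordinates `i, j` change, and the load `S i * x i + S j * x j` is preserved, so
`S j * (x' j - x j) = -S i * (x' i - x i)`. The reward therefore changes by
`(θ i - θ j) * S i * (x' i - x i)`, and the exchange always raises `x i` strictly: either to `1`,
or to `(S i * x i + S j * x j) / S i`, which exceeds `x i` because `S j * x j > 0`.
-/

open Finset

theorem Fintype.sum_eq_sum_add_of_eq_off_pair {ι M : Type*} [Fintype ι] [AddCommGroup M]
    {g g' : ι → M} {i j : ι} (hij : i ≠ j) (h : ∀ k, k ≠ i → k ≠ j → g' k = g k) :
    ∑ k, g' k = ∑ k, g k + ((g' i - g i) + (g' j - g j)) := by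
  rw [← sub_eq_iff_eq_add', ← sum_sub_distrib]
  exact Fintype.sum_eq_add i j hij fun k ⟨hki, hkj⟩ ↦ sub_eq_zero.2 (h k hki hkj)

/-- The exchange on a pair of coordinates with weights `a, b`: the total `a * u + b * v` is moved
onto `u` as far as possible. -/
theorem pair_exchange {a b u v u' v' : ℝ} (ha : 0 < a) (hb : 0 < b)
    (hu0 : 0 ≤ u) (hu1 : u < 1) (hv0 : 0 < v) (hv1 : v ≤ 1)
    (hge : a ≤ a * u + b * v → u' = 1 ∧ v' = (a * u + b * v - a) / b)
    (hlt : a * u + b * v < a → u' = (a * u + b * v) / a ∧ v' = 0) :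
    a * u' + b * v' = a * u + b * v ∧ u' ∈ Set.Icc 0 1 ∧ v' ∈ Set.Icc 0 1 ∧ (u' = 1 ∨ v' = 0) ∧
      u < u' := by
  rcases le_or_gt a (a * u + b * v) with hs | hs
  · obtain ⟨rfl, rfl⟩ := hge hs
    have hbv' : b * ((a * u + b * v - a) / b) = a * u + b * v - a := mul_div_cancel₀ _ hb.ne'
    refine ⟨by linarith, ⟨zero_le_one, le_rfl⟩, ⟨div_nonneg (by linarith) hb.le, ?_⟩,
      Or.inl rfl, hu1⟩
    exact (div_le_one hb).2 (by nlinarith [mul_le_mul_of_nonneg_left hv1 hb.le])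
  · obtain ⟨rfl, rfl⟩ := hlt hs
    have hau' : a * ((a * u + b * v) / a) = a * u + b * v := mul_div_cancel₀ _ ha.ne'
    refine ⟨by linarith, ⟨div_nonneg (by positivity) ha.le, (div_le_one ha).2 hs.le⟩,
      ⟨le_rfl, zero_le_one⟩, Or.inr rfl, ?_⟩
    exact (lt_div_iff₀ ha).2 (by linarith [mul_pos hb hv0])

section EqOffPair

variable {F : ℕ} {S θ x x' : Fin F → ℝ} {i j : Fin F}

theorem sum_mul_eq_add_of_eq_off_pair (c : Fin F → ℝ) (hij : i ≠ j)
    (hout : ∀ k, k ≠ i → k ≠ j → x' k = x k) :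
    ∑ f, c f * x' f = ∑ f, c f * x f + (c i * (x' i - x i) + c j * (x' j - x j)) := by
  simp only [mul_sub]
  exact Fintype.sum_eq_sum_add_of_eq_off_pair hij fun k hki hkj ↦ by rw [hout k hki hkj]

theorem LPFeasible.of_eq_off_pair {M : ℝ} (hx : LPFeasible S M x) (hij : i ≠ j)
    (hout : ∀ k, k ≠ i → k ≠ j → x' k = x k) (hi : x' i ∈ Set.Icc 0 1) (hj : x' j ∈ Set.Icc 0 1)
    (hload : S i * x' i + S j * x' j = S i * x i + S j * x j) : LPFeasible S M x' := by
  refine ⟨fun f ↦ ?_, ?_⟩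
  · by_cases hfi : f = i
    · exact hfi ▸ hi
    by_cases hfj : f = j
    · exact hfj ▸ hj
    exact hout f hfi hfj ▸ hx.1 f
  · rw [sum_mul_eq_add_of_eq_off_pair S hij hout]
    linarith [hx.2]

theorem reward_sub_of_eq_off_pair (hij : i ≠ j) (hout : ∀ k, k ≠ i → k ≠ j → x' k = x k)
    (hload : S i * x' i + S j * x' j = S i * x i + S j * x j) :
    reward θ S x' - reward θ S x = (θ i - θ j) * (S i * (x' i - x i)) := by
  unfold reward
  rw [sum_mul_eq_add_of_eq_off_pair (fun f ↦ θ f * S f) hij hout]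
  linear_combination θ j * hload

end EqOffPair

theorem lp_exchange_explicit_general
    (F : ℕ) (S θ : Fin F → ℝ)
    (hS : ∀ f, 0 < S f)
    (M : ℝ)
    (i j : Fin F) (hij : i ≠ j) (hθij : θ j ≤ θ i)
    (x : Fin F → ℝ) (hx : LPFeasible S M x)
    (hxi0 : 0 < x i) (hxi1 : x i < 1)
    (hxj0 : 0 < x j) (hxj1 : x j < 1)
    (x' : Fin F → ℝ)
    (hx'out : ∀ k, k ≠ i → k ≠ j → x' k = x k)
    (hx'ge : S i ≤ S i * x i + S j * x j →
      x' i = 1 ∧ x' j = (S i * x i + S j * x j - S i) / S j)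
    (hx'lt : S i * x i + S j * x j < S i →
      x' i = (S i * x i + S j * x j) / S i ∧ x' j = 0) :
    LPFeasible S M x' ∧
    S i * x' i + S j * x' j = S i * x i + S j * x j ∧
    ((x' i = 0 ∨ x' i = 1) ∨ (x' j = 0 ∨ x' j = 1)) ∧
    reward θ S x ≤ reward θ S x' ∧
    (θ j < θ i → reward θ S x < reward θ S x') := by
  obtain ⟨hload, hi, hj, hintegral, hraise⟩ :=
    pair_exchange (hS i) (hS j) hxi0.le hxi1 hxj0 hxj1.le hx'ge hx'lt
  have hgain := reward_sub_of_eq_off_pair (θ := θ) hij hx'out hload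
  have hmoved : 0 < S i * (x' i - x i) := mul_pos (hS i) (sub_pos.2 hraise)
  refine ⟨hx.of_eq_off_pair hij hx'out hi hj hload, hload, hintegral.imp Or.inr Or.inl, ?_,
    fun hθ ↦ ?_⟩
  · exact sub_nonneg.1 (hgain ▸ mul_nonneg (sub_nonneg.2 hθij) hmoved.le)
  · exact sub_pos.1 (hgain ▸ mul_pos (sub_pos.2 hθ) hmoved)

/-- Strict exchange reduces fractional coordinates without losing
reward: the explicit exchange `x'` keeping `S_i x_i + S_j x_j` constant is
LP-feasible, integralises at least one of the coordinates `i, j`, does not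
decrease the reward, and strictly increases it when `θ i > θ j`. -/
theorem lp_exchange_explicit
    (F : ℕ) (hF : 1 ≤ F) (S θ : Fin F → ℝ)
    (hS : ∀ f, 0 < S f)
    (hθ0 : ∀ f, 0 ≤ θ f)
    (M : ℝ) (hM0 : 0 ≤ M)
    (i j : Fin F) (hij : i ≠ j) (hθij : θ j ≤ θ i)
    (x : Fin F → ℝ) (hx : LPFeasible S M x)
    (hxi0 : 0 < x i) (hxi1 : x i < 1)
    (hxj0 : 0 < x j) (hxj1 : x j < 1)
    (x' : Fin F → ℝ)
    (hx'out : ∀ k, k ≠ i → k ≠ j → x' k = x k)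
    (hx'ge : S i ≤ S i * x i + S j * x j →
      x' i = 1 ∧ x' j = (S i * x i + S j * x j - S i) / S j)
    (hx'lt : S i * x i + S j * x j < S i →
      x' i = (S i * x i + S j * x j) / S i ∧ x' j = 0) :
    LPFeasible S M x' ∧
    S i * x' i + S j * x' j = S i * x i + S j * x j ∧
    ((x' i = 0 ∨ x' i = 1) ∨ (x' j = 0 ∨ x' j = 1)) ∧
    reward θ S x ≤ reward θ S x' ∧
    (θ j < θ i → reward θ S x < reward θ S x') :=
  lp_exchange_explicit_general F S θ hS M i j hij hθij x hx hxi0 hxi1 hxj0 hxj1 x' hx'out hx'ge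
    hx'lt
end
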